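/- arXiv:2602.04682 — 3 statements merged into one kernel-verified Lean document; each statement's English description precedes it below -/
import Mathlib

section
/- Deterministic core of Theorem 1(a) (prediction error for the group lasso with known design): let k ≥ 1, n ≥ 1, κ > 0, ε ≥ 0, λ ≥ 0, let L : ℝ^k → ℝ be differentiable, and let β ∈ ℝ^k. Assume: (restricted strong convexity) for all Δ ∈ ℝ^k, (1/n)(L(β + Δ) − L(β) − ⟨∇L(β), Δ⟩) ≥ (κ/2)‖Δ‖₂²; (score bound) ‖(1/n)∇L(β)‖₂ ≤ ε; and β̂ is a global minimizer of b ↦ L(b) + λ√k‖b‖₂. Then ‖β̂ − β‖₂ ≤ (2/κ)(ε + λ√k/n). Moreover, if Z is an n×k real matrix and ν_max is the largest eigenvalue of D = (1/n)ZᵀZ, then the prediction error satisfies (1/n)‖Z(β̂ − β)‖₂² ≤ ν_max·(4/κ²)·(ε + λ√k/n)². -/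
open Matrix
open scoped RealInnerProductSpace

/-!
Put `Δ = β̂ - β`. Comparing the penalized objective at `β̂` and at `β` and using the triangle
inequality gives `L β̂ - L β ≤ λ√k ‖Δ‖`, while Cauchy–Schwarz and the score bound give
`-⟪∇L β, Δ⟫ ≤ n ε ‖Δ‖`. Inserting both into restricted strong convexity yields
`κ/2 ‖Δ‖² ≤ (ε + λ√k/n) ‖Δ‖`, i.e. the estimation bound. The prediction bound follows because
`(1/n) ‖Z Δ‖²` is the quadratic form of `D` at `Δ`, which is at most `ν_max ‖Δ‖²`.
-/

lemma sub_le_mul_norm_sub_of_forall_add_mul_norm_le {E : Type*} [SeminormedAddCommGroup E]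
    {L : E → ℝ} {ρ : ℝ} (hρ : 0 ≤ ρ)
    {x₀ x : E} (hmin : ∀ b, L x + ρ * ‖x‖ ≤ L b + ρ * ‖b‖) :
    L x - L x₀ ≤ ρ * ‖x - x₀‖ := by
  have htriangle : ‖x₀‖ - ‖x‖ ≤ ‖x - x₀‖ := by
    simpa only [norm_sub_rev x₀ x] using norm_sub_norm_le x₀ x
  nlinarith [hmin x₀]

lemma le_of_mul_sq_le_mul {κ C x : ℝ} (hκ : 0 < κ) (hC : 0 ≤ C) (hx : 0 ≤ x)
    (h : κ / 2 * x ^ 2 ≤ C * x) : x ≤ 2 / κ * C := by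
  rw [div_mul_eq_mul_div, le_div_iff₀ hκ]
  rcases hx.eq_or_lt with rfl | hpos
  · linarith
  · nlinarith

/-- `w` plays the role of `1/n`, `g` of `∇L β` and `ρ` of `λ√k`. -/
lemma norm_sub_le_of_strongConvexity_of_penalized_min {E : Type*} [NormedAddCommGroup E]
    [InnerProductSpace ℝ E] {L : E → ℝ} {g x₀ x : E}
    {κ w ε ρ : ℝ} (hκ : 0 < κ) (hw : 0 ≤ w) (hρ : 0 ≤ ρ)
    (hRSC : ∀ Δ, κ / 2 * ‖Δ‖ ^ 2 ≤ w * (L (x₀ + Δ) - L x₀ - ⟪g, Δ⟫))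
    (hscore : ‖w • g‖ ≤ ε) (hmin : ∀ b, L x + ρ * ‖x‖ ≤ L b + ρ * ‖b‖) :
    ‖x - x₀‖ ≤ 2 / κ * (ε + w * ρ) := by
  set Δ := x - x₀
  have hloss : L (x₀ + Δ) - L x₀ ≤ ρ * ‖Δ‖ := by
    rw [add_sub_cancel]
    exact sub_le_mul_norm_sub_of_forall_add_mul_norm_le hρ hmin
  have hinner : -⟪g, Δ⟫ ≤ ‖g‖ * ‖Δ‖ :=
    (neg_le_abs _).trans (abs_real_inner_le_norm g Δ)
  have hwg : w * ‖g‖ ≤ ε := by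
    rwa [norm_smul, Real.norm_of_nonneg hw] at hscore
  have hkey : κ / 2 * ‖Δ‖ ^ 2 ≤ (ε + w * ρ) * ‖Δ‖ :=
    calc κ / 2 * ‖Δ‖ ^ 2 ≤ w * (L (x₀ + Δ) - L x₀ - ⟪g, Δ⟫) := hRSC Δ
      _ ≤ w * (ρ * ‖Δ‖ + ‖g‖ * ‖Δ‖) := by gcongr; linarith
      _ = (w * ‖g‖ + w * ρ) * ‖Δ‖ := by ring
      _ ≤ (ε + w * ρ) * ‖Δ‖ := by gcongr
  have hε : 0 ≤ ε := (norm_nonneg _).trans hscore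
  exact le_of_mul_sq_le_mul hκ (by positivity) (norm_nonneg Δ) hkey

section Prediction

variable {m ι : Type*} [Fintype m] [Fintype ι]

lemma dotProduct_smul_transpose_mul_self_mulVec (c : ℝ) (Z : Matrix m ι ℝ)
    (v : EuclideanSpace ℝ ι) :
    v ⬝ᵥ ((c • (Zᵀ * Z)) *ᵥ v) = c * ‖(EuclideanSpace.equiv m ℝ).symm (Z *ᵥ v)‖ ^ 2 := by
  have hnorm : ‖(EuclideanSpace.equiv m ℝ).symm (Z *ᵥ v)‖ ^ 2 = Z *ᵥ v ⬝ᵥ Z *ᵥ v := by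
    rw [EuclideanSpace.norm_eq, Real.sq_sqrt (by positivity)]
    simp [dotProduct, pow_two]
  rw [hnorm, smul_mulVec, dotProduct_smul, ← mulVec_mulVec, dotProduct_mulVec,
    vecMul_transpose, smul_eq_mul]

lemma nonneg_of_forall_dotProduct_smul_transpose_mul_self_mulVec_le [Nonempty ι] {c ν : ℝ}
    (hc : 0 ≤ c) (Z : Matrix m ι ℝ)
    (hν : ∀ v : EuclideanSpace ℝ ι, v ⬝ᵥ ((c • (Zᵀ * Z)) *ᵥ v) ≤ ν * ‖v‖ ^ 2) : 0 ≤ ν := by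
  obtain ⟨v, hv⟩ := exists_ne (0 : EuclideanSpace ℝ ι)
  have h := hν v
  rw [dotProduct_smul_transpose_mul_self_mulVec] at h
  have hvpos : 0 < ‖v‖ ^ 2 := by positivity
  nlinarith [mul_nonneg hc (sq_nonneg ‖(EuclideanSpace.equiv m ℝ).symm (Z *ᵥ v)‖)]

lemma mul_norm_mulVec_sq_le [Nonempty ι] {c ν r : ℝ} (hc : 0 ≤ c) (Z : Matrix m ι ℝ)
    (hν : ∀ v : EuclideanSpace ℝ ι, v ⬝ᵥ ((c • (Zᵀ * Z)) *ᵥ v) ≤ ν * ‖v‖ ^ 2)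
    {v : EuclideanSpace ℝ ι} (hv : ‖v‖ ≤ r) :
    c * ‖(EuclideanSpace.equiv m ℝ).symm (Z *ᵥ v)‖ ^ 2 ≤ ν * r ^ 2 :=
  calc c * ‖(EuclideanSpace.equiv m ℝ).symm (Z *ᵥ v)‖ ^ 2 ≤ ν * ‖v‖ ^ 2 := by
        rw [← dotProduct_smul_transpose_mul_self_mulVec]; exact hν v
    _ ≤ ν * r ^ 2 := by
        have := nonneg_of_forall_dotProduct_smul_transpose_mul_self_mulVec_le hc Z hν
        gcongr

end Prediction

theorem theorem1a_core_general {k n : ℕ} (hk : 1 ≤ k)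
    (κ ε lam : ℝ) (hκ : 0 < κ) (hlam : 0 ≤ lam)
    (L : EuclideanSpace ℝ (Fin k) → ℝ)
    (β βhat : EuclideanSpace ℝ (Fin k))
    (hRSC : ∀ Δ : EuclideanSpace ℝ (Fin k),
      κ / 2 * ‖Δ‖ ^ 2 ≤ (1 / (n : ℝ)) * (L (β + Δ) - L β - ⟪gradient L β, Δ⟫))
    (hscore : ‖(1 / (n : ℝ)) • gradient L β‖ ≤ ε)
    (hmin : ∀ b : EuclideanSpace ℝ (Fin k),
      L βhat + lam * Real.sqrt k * ‖βhat‖ ≤ L b + lam * Real.sqrt k * ‖b‖)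
    (Z : Matrix (Fin n) (Fin k) ℝ) (νmax : ℝ)
    (hν : ∀ v : EuclideanSpace ℝ (Fin k),
      v ⬝ᵥ (((1 / (n : ℝ)) • (Zᵀ * Z)).mulVec v) ≤ νmax * ‖v‖ ^ 2) :
    ‖βhat - β‖ ≤ 2 / κ * (ε + lam * Real.sqrt k / n) ∧
      (1 / (n : ℝ)) * ‖(EuclideanSpace.equiv (Fin n) ℝ).symm (Z.mulVec (βhat - β))‖ ^ 2
        ≤ νmax * (4 / κ ^ 2) * (ε + lam * Real.sqrt k / n) ^ 2 := by
  have hw : (0 : ℝ) ≤ 1 / n := by positivity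
  have hestimate : ‖βhat - β‖ ≤ 2 / κ * (ε + lam * Real.sqrt k / n) := by
    have := norm_sub_le_of_strongConvexity_of_penalized_min hκ hw (by positivity) hRSC hscore hmin
    rwa [one_div_mul_eq_div] at this
  have : Nonempty (Fin k) := ⟨⟨0, hk⟩⟩
  refine ⟨hestimate, ?_⟩
  calc (1 / (n : ℝ)) * ‖(EuclideanSpace.equiv (Fin n) ℝ).symm (Z.mulVec (βhat - β))‖ ^ 2
      ≤ νmax * (2 / κ * (ε + lam * Real.sqrt k / n)) ^ 2 := mul_norm_mulVec_sq_le hw Z hν hestimate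
    _ = νmax * (4 / κ ^ 2) * (ε + lam * Real.sqrt k / n) ^ 2 := by ring

/-- Deterministic core of Theorem 1(a): prediction error for the group lasso with known
design, under restricted strong convexity and a score bound. -/
theorem theorem1a_core {k n : ℕ} (hk : 1 ≤ k) (hn : 1 ≤ n)
    (κ ε lam : ℝ) (hκ : 0 < κ) (hε : 0 ≤ ε) (hlam : 0 ≤ lam)
    (L : EuclideanSpace ℝ (Fin k) → ℝ) (hL : Differentiable ℝ L)
    (β βhat : EuclideanSpace ℝ (Fin k))
    (hRSC : ∀ Δ : EuclideanSpace ℝ (Fin k),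
      κ / 2 * ‖Δ‖ ^ 2 ≤ (1 / (n : ℝ)) * (L (β + Δ) - L β - ⟪gradient L β, Δ⟫))
    (hscore : ‖(1 / (n : ℝ)) • gradient L β‖ ≤ ε)
    (hmin : ∀ b : EuclideanSpace ℝ (Fin k),
      L βhat + lam * Real.sqrt k * ‖βhat‖ ≤ L b + lam * Real.sqrt k * ‖b‖)
    (Z : Matrix (Fin n) (Fin k) ℝ) (νmax : ℝ)
    (hν : ∀ v : EuclideanSpace ℝ (Fin k),
      v ⬝ᵥ (((1 / (n : ℝ)) • (Zᵀ * Z)).mulVec v) ≤ νmax * ‖v‖ ^ 2) :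
    ‖βhat - β‖ ≤ 2 / κ * (ε + lam * Real.sqrt k / n) ∧
      (1 / (n : ℝ)) * ‖(EuclideanSpace.equiv (Fin n) ℝ).symm (Z.mulVec (βhat - β))‖ ^ 2
        ≤ νmax * (4 / κ ^ 2) * (ε + lam * Real.sqrt k / n) ^ 2 :=
  theorem1a_core_general hk κ ε lam hκ hlam L β βhat hRSC hscore hmin Z νmax hν
end

section
/- Deterministic core of Theorem 1(b) (uniform prediction error over q group-lasso regressions): let k ≥ 1, n ≥ 1, q ≥ 1, κ > 0, C₀ ≥ 0, λ ≥ 0, let Z be an n×k real matrix with ν_max the largest eigenvalue of D = (1/n)ZᵀZ, and for each j ∈ {1,…,q} let L_j : ℝ^k → ℝ be differentiable and β_j ∈ ℝ^k. Assume for every j: (restricted strong convexity) for all Δ ∈ ℝ^k, (1/n)(L_j(β_j + Δ) − L_j(β_j) − ⟨∇L_j(β_j), Δ⟩) ≥ (κ/2)‖Δ‖₂²; (uniform score bound) ‖(1/n)∇L_j(β_j)‖₂ ≤ C₀√(log q / n); and β̂_j is a global minimizer of b ↦ L_j(b) + λ√k‖b‖₂. Then max over j = 1,…,q of (1/n)‖Z(β̂_j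 − β_j)‖₂² is at most ν_max·(4/κ²)·(C₀√(log q / n) + λ√k/n)². -/
/-!
Comparing the penalized objective at `β̂` and at `β` bounds the excess loss by
`λ√k ‖β̂ - β‖`; Cauchy–Schwarz bounds the linear term by the score, and restricted strong
convexity then gives `(κ/2) ‖β̂ - β‖² ≤ s ‖β̂ - β‖`, where `s` is the bracket of the bound.
Hence `‖β̂ - β‖² ≤ (4/κ²) s²`, and the eigenvalue bound on `D` turns this into the bound on the
prediction error `(β̂ - β)ᵀ D (β̂ - β)`.
-/

open Matrix
open scoped RealInnerProductSpace

lemma sq_le_of_half_mul_sq_le_mul {κ s x : ℝ} (hκ : 0 < κ) (hx : 0 ≤ x)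
    (h : κ / 2 * x ^ 2 ≤ s * x) : x ^ 2 ≤ 4 / κ ^ 2 * s ^ 2 := by
  rcases hx.eq_or_lt with rfl | hx
  · rw [zero_pow two_ne_zero]
    positivity
  have hκx : κ * x ≤ 2 * s := by nlinarith
  have hsq : (κ * x) ^ 2 ≤ (2 * s) ^ 2 := pow_le_pow_left₀ (by positivity) hκx 2
  rw [div_mul_eq_mul_div, le_div_iff₀ (by positivity)]
  nlinarith

section PenalizedEstimation

variable {E : Type*} [NormedAddCommGroup E] [InnerProductSpace ℝ E]

lemma half_mul_norm_sub_sq_le_of_penalized_min {f : E → ℝ} {g β βhat : E} {κ c μ : ℝ}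
    (hc : 0 ≤ c) (hμ : 0 ≤ μ)
    (hrsc : κ / 2 * ‖βhat - β‖ ^ 2 ≤ c * (f βhat - f β - ⟪g, βhat - β⟫))
    (hmin : f βhat + μ * ‖βhat‖ ≤ f β + μ * ‖β‖) :
    κ / 2 * ‖βhat - β‖ ^ 2 ≤ c * (‖g‖ + μ) * ‖βhat - β‖ := by
  have hpen : f βhat - f β ≤ μ * ‖βhat - β‖ := by
    have htri := norm_sub_norm_le β βhat
    rw [norm_sub_rev] at htri
    nlinarith
  have hscore : -⟪g, βhat - β⟫ ≤ ‖g‖ * ‖βhat - β‖ :=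
    (neg_le_abs _).trans (abs_real_inner_le_norm g _)
  calc κ / 2 * ‖βhat - β‖ ^ 2 ≤ c * (f βhat - f β - ⟪g, βhat - β⟫) := hrsc
    _ ≤ c * (μ * ‖βhat - β‖ + ‖g‖ * ‖βhat - β‖) := by gcongr; linarith
    _ = c * (‖g‖ + μ) * ‖βhat - β‖ := by ring

lemma norm_sub_sq_le_of_penalized_min {f : E → ℝ} {g β βhat : E} {κ c μ : ℝ}
    (hκ : 0 < κ) (hc : 0 ≤ c) (hμ : 0 ≤ μ)
    (hrsc : κ / 2 * ‖βhat - β‖ ^ 2 ≤ c * (f βhat - f β - ⟪g, βhat - β⟫))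
    (hmin : f βhat + μ * ‖βhat‖ ≤ f β + μ * ‖β‖) :
    ‖βhat - β‖ ^ 2 ≤ 4 / κ ^ 2 * (c * (‖g‖ + μ)) ^ 2 :=
  sq_le_of_half_mul_sq_le_mul hκ (norm_nonneg _)
    (half_mul_norm_sub_sq_le_of_penalized_min hc hμ hrsc hmin)

end PenalizedEstimation

section GramForm

variable {m p : Type*} [Fintype m] [Fintype p]

lemma Matrix.dotProduct_smul_transpose_mul_mulVec (c : ℝ) (Z : Matrix m p ℝ) (v : p → ℝ) :
    v ⬝ᵥ ((c • (Zᵀ * Z)) *ᵥ v) = c * ‖(EuclideanSpace.equiv m ℝ).symm (Z *ᵥ v)‖ ^ 2 := by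
  rw [smul_mulVec, dotProduct_smul, smul_eq_mul, ← mulVec_mulVec, dotProduct_mulVec,
    vecMul_transpose, EuclideanSpace.norm_sq_eq]
  simp [dotProduct, sq]

lemma nonneg_of_smul_gram_form_le [Nonempty p] {c ν : ℝ} {Z : Matrix m p ℝ} (hc : 0 ≤ c)
    (hν : ∀ v : EuclideanSpace ℝ p, v ⬝ᵥ ((c • (Zᵀ * Z)) *ᵥ v) ≤ ν * ‖v‖ ^ 2) : 0 ≤ ν := by
  classical
  have h := hν (PiLp.single 2 (Classical.arbitrary p) 1)
  rw [dotProduct_smul_transpose_mul_mulVec, PiLp.norm_single, norm_one, one_pow,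
    mul_one] at h
  exact le_trans (by positivity) h

end GramForm

theorem theorem1b_core_general {k n q : ℕ} (hk : 1 ≤ k)
    (κ C₀ lam : ℝ) (hκ : 0 < κ) (hlam : 0 ≤ lam)
    (Z : Matrix (Fin n) (Fin k) ℝ) (νmax : ℝ)
    (hν : ∀ v : EuclideanSpace ℝ (Fin k),
      v ⬝ᵥ (((1 / (n : ℝ)) • (Zᵀ * Z)).mulVec v) ≤ νmax * ‖v‖ ^ 2)
    (L : Fin q → EuclideanSpace ℝ (Fin k) → ℝ)
    (β βhat : Fin q → EuclideanSpace ℝ (Fin k))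
    (hRSC : ∀ j, ∀ Δ : EuclideanSpace ℝ (Fin k),
      κ / 2 * ‖Δ‖ ^ 2 ≤ (1 / (n : ℝ)) *
        (L j (β j + Δ) - L j (β j) - ⟪gradient (L j) (β j), Δ⟫))
    (hscore : ∀ j, ‖(1 / (n : ℝ)) • gradient (L j) (β j)‖
      ≤ C₀ * Real.sqrt (Real.log q / n))
    (hmin : ∀ j, ∀ b : EuclideanSpace ℝ (Fin k),
      L j (βhat j) + lam * Real.sqrt k * ‖βhat j‖ ≤ L j b + lam * Real.sqrt k * ‖b‖) :
    ∀ j, (1 / (n : ℝ)) *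
        ‖(EuclideanSpace.equiv (Fin n) ℝ).symm (Z.mulVec (βhat j - β j))‖ ^ 2
      ≤ νmax * (4 / κ ^ 2) *
        (C₀ * Real.sqrt (Real.log q / n) + lam * Real.sqrt k / n) ^ 2 := by
  intro j
  have : Nonempty (Fin k) := ⟨⟨0, hk⟩⟩
  have hc : (0 : ℝ) ≤ 1 / n := by positivity
  have hμ : 0 ≤ lam * Real.sqrt k := by positivity
  have hrsc := hRSC j (βhat j - β j)
  rw [add_sub_cancel] at hrsc
  have hd := norm_sub_sq_le_of_penalized_min hκ hc hμ hrsc (hmin j (β j))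
  have hs : 1 / n * (‖gradient (L j) (β j)‖ + lam * Real.sqrt k)
      ≤ C₀ * Real.sqrt (Real.log q / n) + lam * Real.sqrt k / n := by
    have hg := hscore j
    rw [norm_smul, Real.norm_of_nonneg hc] at hg
    linarith [show 1 / (n : ℝ) * (lam * Real.sqrt k) = lam * Real.sqrt k / n by ring]
  rw [← dotProduct_smul_transpose_mul_mulVec]
  calc _ ≤ νmax * ‖βhat j - β j‖ ^ 2 := hν _
    _ ≤ νmax * (4 / κ ^ 2 * (C₀ * Real.sqrt (Real.log q / n) + lam * Real.sqrt k / n) ^ 2) := by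
        gcongr
        · exact nonneg_of_smul_gram_form_le hc hν
        · exact hd.trans (by gcongr)
    _ = _ := by ring

/-- Deterministic core of Theorem 1(b): uniform prediction error over `q` group-lasso
regressions.  The conclusion `∀ j, … ≤ B` expresses that the maximum over `j = 1,…,q`
is at most `B`. -/
theorem theorem1b_core {k n q : ℕ} (hk : 1 ≤ k) (hn : 1 ≤ n) (hq : 1 ≤ q)
    (κ C₀ lam : ℝ) (hκ : 0 < κ) (hC₀ : 0 ≤ C₀) (hlam : 0 ≤ lam)
    (Z : Matrix (Fin n) (Fin k) ℝ) (νmax : ℝ)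
    (hν : ∀ v : EuclideanSpace ℝ (Fin k),
      v ⬝ᵥ (((1 / (n : ℝ)) • (Zᵀ * Z)).mulVec v) ≤ νmax * ‖v‖ ^ 2)
    (L : Fin q → EuclideanSpace ℝ (Fin k) → ℝ) (hL : ∀ j, Differentiable ℝ (L j))
    (β βhat : Fin q → EuclideanSpace ℝ (Fin k))
    (hRSC : ∀ j, ∀ Δ : EuclideanSpace ℝ (Fin k),
      κ / 2 * ‖Δ‖ ^ 2 ≤ (1 / (n : ℝ)) *
        (L j (β j + Δ) - L j (β j) - ⟪gradient (L j) (β j), Δ⟫))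
    (hscore : ∀ j, ‖(1 / (n : ℝ)) • gradient (L j) (β j)‖
      ≤ C₀ * Real.sqrt (Real.log q / n))
    (hmin : ∀ j, ∀ b : EuclideanSpace ℝ (Fin k),
      L j (βhat j) + lam * Real.sqrt k * ‖βhat j‖ ≤ L j b + lam * Real.sqrt k * ‖b‖) :
    ∀ j, (1 / (n : ℝ)) *
        ‖(EuclideanSpace.equiv (Fin n) ℝ).symm (Z.mulVec (βhat j - β j))‖ ^ 2
      ≤ νmax * (4 / κ ^ 2) *
        (C₀ * Real.sqrt (Real.log q / n) + lam * Real.sqrt k / n) ^ 2 :=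
  theorem1b_core_general hk κ C₀ lam hκ hlam Z νmax hν L β βhat hRSC hscore hmin
end

section
/- Measurement-error bias bound (Step 5 of the proof of Theorem 2, combined): fix n ≥ 1, k ≥ 1, γ ∈ ℝ, an n×k real design matrix Z with rows z_i, responses y_1, …, y_n ∈ [0, 1], and an n×k perturbation matrix U with |U_{ij}| ≤ δ_∞ for all entries (δ_∞ ≥ 0). Let ν_max be the largest eigenvalue of D = (1/n)ZᵀZ, and for an n×k matrix X with rows x_i define L(b; X) = Σ_{i=1}^n [log(1 + exp(γ + ⟨x_i, b⟩)) − y_i·(γ + ⟨x_i, b⟩)]. Then for all β, β̂ ∈ ℝ^k, with B = max(‖β‖₂, ‖β̂‖₂), |L(β̂; Z+U) − L(β̂; Z) − L(β; Z+U) + L(β; Z)| ≤ n·δ_∞·√k·(1 + (√ν_max/4)·B)·‖β̂ − β‖₂. -/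
/-!
With `ℓ_y(p) = log (1 + exp p) - y p` and linear predictors `p_i(b) = γ + ⟨z_i, b⟩`,
`q_i(b) = ⟨u_i, b⟩`, the quantity to bound is `∑ᵢ [h_i(β̂) - h_i(β)]` where
`h_i = ℓ_{y_i}(p_i + q_i) - ℓ_{y_i}(p_i)`. Along the segment from `β` to `β̂` the derivative of
`h_i` is `(σ(p + q) - y) Δq + (σ(p + q) - σ p) Δp`; since `|σ - y| ≤ 1`, `σ` is `1/4`-Lipschitz and
`|q| ≤ δ_∞ √k B` on the segment, each term is at most `|⟨u_i, d⟩| + (δ_∞ √k B / 4) |⟨z_i, d⟩|`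
with `d = β̂ - β`. Summing, `∑ᵢ |⟨u_i, d⟩| ≤ n δ_∞ √k ‖d‖` by Cauchy–Schwarz, and
`∑ᵢ |⟨z_i, d⟩| ≤ √n ‖Z d‖ ≤ n √ν_max ‖d‖` by the eigenvalue bound on `D`.
-/

open Matrix

/-- The logistic negative log-likelihood with intercept `γ`, design matrix `X`
(with rows `X i`) and responses `y`. -/
noncomputable def logisticNLL {n k : ℕ} (γ : ℝ) (y : Fin n → ℝ)
    (X : Matrix (Fin n) (Fin k) ℝ) (b : EuclideanSpace ℝ (Fin k)) : ℝ :=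
  ∑ i, (Real.log (1 + Real.exp (γ + X i ⬝ᵥ b)) - y i * (γ + X i ⬝ᵥ b))

open Real Set

lemma lipschitzWith_sigmoid : LipschitzWith 4⁻¹ sigmoid := by
  refine lipschitzWith_of_nnnorm_deriv_le differentiable_sigmoid fun x => ?_
  rw [← NNReal.coe_le_coe, coe_nnnorm, deriv_sigmoid, norm_of_nonneg
    (mul_nonneg (sigmoid_nonneg x) (sub_nonneg.2 (sigmoid_le_one x)))]
  push_cast
  nlinarith [sq_nonneg (sigmoid x - 2⁻¹)]

lemma abs_sigmoid_sub_sigmoid_le (a b : ℝ) : |sigmoid a - sigmoid b| ≤ |a - b| / 4 := by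
  simpa [Real.dist_eq, div_eq_inv_mul] using lipschitzWith_sigmoid.dist_le_mul a b

noncomputable def logisticLoss (y p : ℝ) : ℝ := log (1 + exp p) - y * p

lemma sigmoid_eq_exp_div (x : ℝ) : sigmoid x = exp x / (1 + exp x) := by
  rw [sigmoid_def, exp_neg]
  field_simp
  ring

lemma hasDerivAt_logisticLoss (y p : ℝ) : HasDerivAt (logisticLoss y) (sigmoid p - y) p := by
  have h := (((hasDerivAt_exp p).const_add 1).log (by positivity)).sub
    ((hasDerivAt_id p).const_mul y)
  rwa [mul_one, ← sigmoid_eq_exp_div] at h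

lemma abs_sigmoid_sub_mul_add_sigmoid_sub_mul_le {y s p : ℝ} (hy : y ∈ Icc 0 1) (a b : ℝ) :
    |(sigmoid s - y) * a + (sigmoid s - sigmoid p) * b| ≤ |a| + |s - p| / 4 * |b| := by
  have hσy : |sigmoid s - y| ≤ 1 :=
    abs_sub_le_of_nonneg_of_le (sigmoid_nonneg _) (sigmoid_le_one _) hy.1 hy.2
  calc _ ≤ |sigmoid s - y| * |a| + |sigmoid s - sigmoid p| * |b| := by
        rw [← abs_mul, ← abs_mul]; exact abs_add_le _ _
    _ ≤ 1 * |a| + |s - p| / 4 * |b| := by gcongr; exact abs_sigmoid_sub_sigmoid_le s p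
    _ = |a| + |s - p| / 4 * |b| := by rw [one_mul]

lemma abs_logisticLoss_shift_sub_le {y p₀ p₁ q₀ q₁ Q : ℝ} (hy : y ∈ Icc 0 1)
    (hq₀ : |q₀| ≤ Q) (hq₁ : |q₁| ≤ Q) :
    |(logisticLoss y (p₁ + q₁) - logisticLoss y p₁) - (logisticLoss y (p₀ + q₀) - logisticLoss y p₀)|
      ≤ |q₁ - q₀| + Q / 4 * |p₁ - p₀| := by
  have hline (a b t : ℝ) : HasDerivAt (fun t => logisticLoss y (a + t * b))
      ((sigmoid (a + t * b) - y) * b) t :=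
    (hasDerivAt_logisticLoss y _).comp t ((hasDerivAt_mul_const b).const_add a)
  set s : ℝ → ℝ := fun t => p₀ + q₀ + t * (p₁ - p₀ + (q₁ - q₀))
  set p : ℝ → ℝ := fun t => p₀ + t * (p₁ - p₀)
  set f : ℝ → ℝ := fun t => logisticLoss y (s t) - logisticLoss y (p t)
  have hf (t : ℝ) : HasDerivAt f ((sigmoid (s t) - y) * (q₁ - q₀)
      + (sigmoid (s t) - sigmoid (p t)) * (p₁ - p₀)) t :=
    ((hline _ _ t).sub (hline _ _ t)).congr_deriv (by ring)
  have hsp {t : ℝ} (ht : t ∈ Ico (0 : ℝ) 1) : |s t - p t| ≤ Q := by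
    rw [show s t - p t = q₀ + t * (q₁ - q₀) by ring, abs_le]
    rw [abs_le] at hq₀ hq₁
    constructor <;> nlinarith [ht.1, ht.2]
  have key := norm_image_sub_le_of_norm_deriv_le_segment_01'
    (C := |q₁ - q₀| + Q / 4 * |p₁ - p₀|) (fun t _ => (hf t).hasDerivWithinAt) fun t ht => by
      rw [Real.norm_eq_abs]
      refine (abs_sigmoid_sub_mul_add_sigmoid_sub_mul_le hy _ _).trans ?_
      gcongr
      exact hsp ht
  simp only [f, s, p, zero_mul, add_zero, one_mul, Real.norm_eq_abs] at key
  rwa [show p₀ + q₀ + (p₁ - p₀ + (q₁ - q₀)) = p₁ + q₁ by ring, add_sub_cancel] at key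

lemma sum_abs_le_sqrt_card_mul_sqrt_sum_sq {ι : Type*} [Fintype ι] (w : ι → ℝ) :
    ∑ i, |w i| ≤ √(Fintype.card ι) * √(∑ i, w i ^ 2) := by
  rw [← sqrt_mul (Nat.cast_nonneg _), le_sqrt (Finset.sum_nonneg fun i _ => abs_nonneg _)
    (by positivity)]
  simpa only [sq_abs, Finset.card_univ] using
    sq_sum_le_card_mul_sum_sq (s := Finset.univ) (f := fun i => |w i|)

lemma abs_dotProduct_le_of_abs_le {ι : Type*} [Fintype ι] {u : ι → ℝ} {δ : ℝ} (hδ : 0 ≤ δ)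
    (hu : ∀ j, |u j| ≤ δ) (v : EuclideanSpace ℝ ι) :
    |u ⬝ᵥ v| ≤ δ * √(Fintype.card ι) * ‖v‖ := by
  have hnorm : ‖WithLp.toLp 2 u‖ ≤ δ * √(Fintype.card ι) := by
    rw [EuclideanSpace.norm_eq]
    calc √(∑ j, ‖u j‖ ^ 2) ≤ √(∑ _j : ι, δ ^ 2) :=
          sqrt_le_sqrt (Finset.sum_le_sum fun j _ => pow_le_pow_left₀ (norm_nonneg _) (hu j) 2)
      _ = δ * √(Fintype.card ι) := by
          rw [Finset.sum_const, Finset.card_univ, nsmul_eq_mul, sqrt_mul' _ (sq_nonneg δ),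
            sqrt_sq hδ, mul_comm]
  calc |u ⬝ᵥ v| = |inner ℝ v (WithLp.toLp 2 u)| := by
        rw [EuclideanSpace.inner_eq_star_dotProduct, star_trivial]
    _ ≤ ‖v‖ * ‖WithLp.toLp 2 u‖ := abs_real_inner_le_norm _ _
    _ ≤ δ * √(Fintype.card ι) * ‖v‖ := by
        rw [mul_comm]; exact mul_le_mul_of_nonneg_right hnorm (norm_nonneg v)

lemma sum_sq_dotProduct_eq_dotProduct_mulVec {m ι : Type*} [Fintype m] [Fintype ι]
    (Z : Matrix m ι ℝ) (v : ι → ℝ) : ∑ i, (Z i ⬝ᵥ v) ^ 2 = v ⬝ᵥ (Zᵀ * Z) *ᵥ v := by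
  rw [← mulVec_mulVec, dotProduct_transpose_mulVec]
  simp only [dotProduct, mulVec, sq]

lemma sum_abs_dotProduct_le {m ι : Type*} [Fintype m] [Fintype ι] (Z : Matrix m ι ℝ)
    {ν : ℝ} {v : EuclideanSpace ℝ ι}
    (hν : v ⬝ᵥ ((1 / (Fintype.card m : ℝ)) • (Zᵀ * Z)) *ᵥ v ≤ ν * ‖v‖ ^ 2) :
    ∑ i, |Z i ⬝ᵥ v| ≤ Fintype.card m * √ν * ‖v‖ := by
  rcases isEmpty_or_nonempty m with hm | hm
  · simp
  have hsq : ∑ i, (Z i ⬝ᵥ v) ^ 2 ≤ Fintype.card m * (ν * ‖v‖ ^ 2) := by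
    rw [smul_mulVec, dotProduct_smul, smul_eq_mul, one_div,
      inv_mul_le_iff₀ (by exact_mod_cast Fintype.card_pos)] at hν
    rwa [sum_sq_dotProduct_eq_dotProduct_mulVec]
  calc ∑ i, |Z i ⬝ᵥ v| ≤ √(Fintype.card m) * √(Fintype.card m * (ν * ‖v‖ ^ 2)) :=
        (sum_abs_le_sqrt_card_mul_sqrt_sum_sq _).trans (by gcongr)
    _ = Fintype.card m * √ν * ‖v‖ := by
        rw [sqrt_mul (Nat.cast_nonneg _), sqrt_mul' _ (sq_nonneg _), sqrt_sq (norm_nonneg v),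
          ← mul_assoc, mul_self_sqrt (Nat.cast_nonneg _), mul_assoc]

lemma logisticNLL_add_sub_logisticNLL {n k : ℕ} (γ : ℝ) (y : Fin n → ℝ)
    (Z U : Matrix (Fin n) (Fin k) ℝ) (b : EuclideanSpace ℝ (Fin k)) :
    logisticNLL γ y (Z + U) b - logisticNLL γ y Z b =
      ∑ i, (logisticLoss (y i) (γ + Z i ⬝ᵥ b + U i ⬝ᵥ b) - logisticLoss (y i) (γ + Z i ⬝ᵥ b)) := by
  simp only [logisticNLL, logisticLoss, ← Finset.sum_sub_distrib, add_assoc,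
    ← add_dotProduct]
  rfl

lemma abs_logisticLoss_shift_dotProduct_sub_le {ι : Type*} [Fintype ι] {y δ : ℝ}
    (hy : y ∈ Icc 0 1) (hδ : 0 ≤ δ) (γ : ℝ) (z : ι → ℝ) {u : ι → ℝ} (hu : ∀ j, |u j| ≤ δ)
    (β βhat : EuclideanSpace ℝ ι) :
    |(logisticLoss y (γ + z ⬝ᵥ βhat + u ⬝ᵥ βhat) - logisticLoss y (γ + z ⬝ᵥ βhat))
        - (logisticLoss y (γ + z ⬝ᵥ β + u ⬝ᵥ β) - logisticLoss y (γ + z ⬝ᵥ β))|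
      ≤ |u ⬝ᵥ (βhat - β)|
        + δ * √(Fintype.card ι) * max ‖β‖ ‖βhat‖ / 4 * |z ⬝ᵥ (βhat - β)| := by
  have hu' {b : EuclideanSpace ℝ ι} (hb : ‖b‖ ≤ max ‖β‖ ‖βhat‖) :
      |u ⬝ᵥ b| ≤ δ * √(Fintype.card ι) * max ‖β‖ ‖βhat‖ :=
    (abs_dotProduct_le_of_abs_le hδ hu b).trans (mul_le_mul_of_nonneg_left hb (by positivity))
  have h := abs_logisticLoss_shift_sub_le hy (hu' (le_max_left _ _)) (hu' (le_max_right _ _))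
    (p₀ := γ + z ⬝ᵥ β) (p₁ := γ + z ⬝ᵥ βhat)
  rwa [← dotProduct_sub, add_sub_add_left_eq_sub, ← dotProduct_sub] at h

theorem measurement_error_bias_bound_general {n k : ℕ} (γ : ℝ)
    (Z U : Matrix (Fin n) (Fin k) ℝ)
    (y : Fin n → ℝ) (hy : ∀ i, y i ∈ Set.Icc (0 : ℝ) 1)
    (δinf : ℝ) (hδ : 0 ≤ δinf) (hU : ∀ i j, |U i j| ≤ δinf)
    (νmax : ℝ)
    (hν : ∀ v : EuclideanSpace ℝ (Fin k),
      v ⬝ᵥ (((1 / (n : ℝ)) • (Zᵀ * Z)).mulVec v) ≤ νmax * ‖v‖ ^ 2) :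
    ∀ β βhat : EuclideanSpace ℝ (Fin k),
      |logisticNLL γ y (Z + U) βhat - logisticNLL γ y Z βhat
          - logisticNLL γ y (Z + U) β + logisticNLL γ y Z β|
        ≤ (n : ℝ) * δinf * Real.sqrt k *
            (1 + Real.sqrt νmax / 4 * max ‖β‖ ‖βhat‖) * ‖βhat - β‖ := by
  intro β βhat
  have hZsum : ∑ i, |Z i ⬝ᵥ (βhat - β)| ≤ n * √νmax * ‖βhat - β‖ := by
    simpa only [Fintype.card_fin, WithLp.ofLp_sub] using
      sum_abs_dotProduct_le Z (v := βhat - β) (by simpa only [Fintype.card_fin] using hν _)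
  have hUsum : ∑ i, |U i ⬝ᵥ (βhat - β)| ≤ n * (δinf * √k * ‖βhat - β‖) := by
    simpa using Finset.sum_le_sum fun i (_ : i ∈ Finset.univ) =>
      abs_dotProduct_le_of_abs_le hδ (hU i) (βhat - β)
  set Q := δinf * √k * max ‖β‖ ‖βhat‖
  rw [show ∀ a b c d : ℝ, a - b - c + d = (a - b) - (c - d) by intros; ring,
    logisticNLL_add_sub_logisticNLL, logisticNLL_add_sub_logisticNLL, ← Finset.sum_sub_distrib]
  calc _ ≤ ∑ i, (|U i ⬝ᵥ (βhat - β)| + Q / 4 * |Z i ⬝ᵥ (βhat - β)|) := by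
        refine (Finset.abs_sum_le_sum_abs _ _).trans (Finset.sum_le_sum fun i _ => ?_)
        simpa using abs_logisticLoss_shift_dotProduct_sub_le (hy i) hδ γ (Z i) (hU i) β βhat
    _ = ∑ i, |U i ⬝ᵥ (βhat - β)| + Q / 4 * ∑ i, |Z i ⬝ᵥ (βhat - β)| := by
        rw [Finset.sum_add_distrib, Finset.mul_sum]
    _ ≤ n * (δinf * √k * ‖βhat - β‖) + Q / 4 * (n * √νmax * ‖βhat - β‖) := by
        gcongr
    _ = _ := by ring

/-- Measurement-error bias bound (Step 5 of the proof of Theorem 2, combined):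
the difference `L(β̂; Z+U) − L(β̂; Z) − L(β; Z+U) + L(β; Z)` is bounded by
`n δ_∞ √k (1 + (√νmax/4) B) ‖β̂ − β‖₂` with `B = max(‖β‖₂, ‖β̂‖₂)`. -/
theorem measurement_error_bias_bound {n k : ℕ} (hn : 1 ≤ n) (hk : 1 ≤ k) (γ : ℝ)
    (Z U : Matrix (Fin n) (Fin k) ℝ)
    (y : Fin n → ℝ) (hy : ∀ i, y i ∈ Set.Icc (0 : ℝ) 1)
    (δinf : ℝ) (hδ : 0 ≤ δinf) (hU : ∀ i j, |U i j| ≤ δinf)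
    (νmax : ℝ)
    (hν : ∀ v : EuclideanSpace ℝ (Fin k),
      v ⬝ᵥ (((1 / (n : ℝ)) • (Zᵀ * Z)).mulVec v) ≤ νmax * ‖v‖ ^ 2) :
    ∀ β βhat : EuclideanSpace ℝ (Fin k),
      |logisticNLL γ y (Z + U) βhat - logisticNLL γ y Z βhat
          - logisticNLL γ y (Z + U) β + logisticNLL γ y Z β|
        ≤ (n : ℝ) * δinf * Real.sqrt k *
            (1 + Real.sqrt νmax / 4 * max ‖β‖ ‖βhat‖) * ‖βhat - β‖ :=
  measurement_error_bias_bound_general γ Z U y hy δinf hδ hU νmax hν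
end
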